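/- arXiv:1205.2188 — 2 statements merged into one kernel-verified Lean document; each statement's English description precedes it below -/
import Mathlib

section
/- Let ψ, φ₁, φ₂ be Orlicz functions with φ₂* the complementary function of φ₂, ψ* the complementary function of ψ, and suppose φ₂ ∘ ψ = φ₁ (as finite-valued functions). Set ζ = φ₂ ∘ ψ*. Then for all u, v, w ≥ 0: uvw ≤ φ₂*(u) + (1/2)·[φ₁(2v) + ζ(2w)]. -/
/-!
The two Young inequalities `(2w)(2v) ≤ ψ(2v) + ψ*(2w)` and `u x ≤ φ₂*(u) + φ₂(x)` do the work.
The first gives `vw ≤ (s + t) / 2` with `s = ψ(2v)`, `t = ψ*(2w)`; since `φ₂` is increasing and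
convex, `φ₂(vw) ≤ (φ₂ s + φ₂ t) / 2 = (φ₁(2v) + ζ(2w)) / 2`, and the second inequality at
`x = vw` concludes.
-/

open Filter

/-- The complementary (Young conjugate) function, with values in EReal. -/
noncomputable def orliczConjE (φ : ℝ → ℝ) (u : ℝ) : EReal :=
  ⨆ v ∈ Set.Ioi (0 : ℝ), ((u * v - φ v : ℝ) : EReal)

open Set Topology

theorem ConvexOn.monotoneOn_Ici_of_isMinOn {𝕜 β : Type*} [Field 𝕜] [LinearOrder 𝕜]
    [IsStrictOrderedRing 𝕜] [AddCommMonoid β] [LinearOrder β] [IsOrderedCancelAddMonoid β]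
    [Module 𝕜 β] [PosSMulStrictMono 𝕜 β] {f : 𝕜 → β} {a : 𝕜} (hf : ConvexOn 𝕜 (Ici a) f)
    (hmin : IsMinOn f (Ici a) a) : MonotoneOn f (Ici a) := by
  intro x hx y hy hxy
  rcases (mem_Ici.1 hx).eq_or_lt with rfl | hax
  · exact hmin hy
  · exact hf.le_right_of_left_le'' self_mem_Ici hy hax hxy (hmin hx)

theorem ConvexOn.le_half_add_of_le_midpoint {s : Set ℝ} {φ : ℝ → ℝ} (hφ : ConvexOn ℝ s φ)
    (hmono : MonotoneOn φ s) {x a b : ℝ} (hx : x ∈ s) (ha : a ∈ s) (hb : b ∈ s)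
    (hxab : x ≤ (a + b) / 2) : φ x ≤ 1 / 2 * (φ a + φ b) := by
  have hhalf : (0 : ℝ) ≤ 1 / 2 := by norm_num
  have hsum : (1 / 2 : ℝ) + 1 / 2 = 1 := by norm_num
  have hmid : (1 / 2 : ℝ) • a + (1 / 2 : ℝ) • b = (a + b) / 2 := by
    simp only [smul_eq_mul]; ring
  calc φ x ≤ φ ((1 / 2 : ℝ) • a + (1 / 2 : ℝ) • b) :=
        hmono hx (hφ.1 ha hb hhalf hhalf hsum) (hmid ▸ hxab)
    _ ≤ (1 / 2 : ℝ) • φ a + (1 / 2 : ℝ) • φ b := hφ.2 ha hb hhalf hhalf hsum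
    _ = 1 / 2 * (φ a + φ b) := by simp only [smul_eq_mul]; ring

theorem ConvexOn.map_mul_le_of_map_zero {φ : ℝ → ℝ} (hφ : ConvexOn ℝ (Ici 0) φ) (h0 : φ 0 = 0)
    {t x : ℝ} (ht₀ : 0 ≤ t) (ht₁ : t ≤ 1) (hx : 0 ≤ x) : φ (t * x) ≤ t * φ x := by
  simpa [h0] using hφ.2 self_mem_Ici hx (sub_nonneg.2 ht₁) ht₀ (sub_add_cancel 1 t)

theorem coe_mul_sub_le_orliczConjE (φ : ℝ → ℝ) (u : ℝ) {v : ℝ} (hv : 0 < v) :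
    ((u * v - φ v : ℝ) : EReal) ≤ orliczConjE φ u :=
  le_iSup₂ (f := fun v (_ : v ∈ Ioi (0 : ℝ)) => ((u * v - φ v : ℝ) : EReal)) v hv

theorem orliczConjE_nonneg {φ : ℝ → ℝ} (hφ : ConvexOn ℝ (Ici 0) φ) (h0 : φ 0 = 0) (u : ℝ) :
    0 ≤ orliczConjE φ u := by
  -- on `(0, 1)` the terms of the supremum are bounded below by `v (u - φ 1)`, which tends to `0`
  have hlim : Tendsto (fun v : ℝ => ((v * (u - φ 1) : ℝ) : EReal)) (𝓝[>] 0) (𝓝 0) := by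
    have hcont : Continuous fun v : ℝ => ((v * (u - φ 1) : ℝ) : EReal) :=
      continuous_coe_real_ereal.comp (by fun_prop)
    exact (hcont.tendsto' 0 0 (by simp)).mono_left nhdsWithin_le_nhds
  refine le_of_tendsto hlim ?_
  filter_upwards [Ioo_mem_nhdsGT one_pos] with v ⟨hv₀, hv₁⟩
  have hφv := hφ.map_mul_le_of_map_zero h0 hv₀.le hv₁.le zero_le_one
  rw [mul_one] at hφv
  calc ((v * (u - φ 1) : ℝ) : EReal) ≤ ((u * v - φ v : ℝ) : EReal) := by
        exact_mod_cast (by linarith : v * (u - φ 1) ≤ u * v - φ v)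
    _ ≤ orliczConjE φ u := coe_mul_sub_le_orliczConjE φ u hv₀

theorem coe_mul_le_orliczConjE_add {φ : ℝ → ℝ} (hφ : ConvexOn ℝ (Ici 0) φ) (h0 : φ 0 = 0)
    (u : ℝ) {x : ℝ} (hx : 0 ≤ x) : ((u * x : ℝ) : EReal) ≤ orliczConjE φ u + φ x := by
  rcases hx.eq_or_lt with rfl | hx
  · simpa [h0] using orliczConjE_nonneg hφ h0 u
  · calc ((u * x : ℝ) : EReal) = ((u * x - φ x : ℝ) : EReal) + φ x := by
          rw [← EReal.coe_add, sub_add_cancel]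
      _ ≤ orliczConjE φ u + φ x := by gcongr; exact coe_mul_sub_le_orliczConjE φ u hx

theorem orlicz_mult_ineq_a_general (ψ φ₁ φ₂ ψstar : ℝ → ℝ)
    (hψconv : ConvexOn ℝ (Set.Ici 0) ψ) (hψ0 : ψ 0 = 0)
    (hψnn : ∀ x, 0 ≤ x → 0 ≤ ψ x)
    (hφ₂conv : ConvexOn ℝ (Set.Ici 0) φ₂) (hφ₂0 : φ₂ 0 = 0)
    (hφ₂nn : ∀ x, 0 ≤ x → 0 ≤ φ₂ x)
    (hψstar : ∀ u : ℝ, 0 ≤ u → ((ψstar u : ℝ) : EReal) = orliczConjE ψ u)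
    (hcomp : ∀ u : ℝ, 0 ≤ u → φ₂ (ψ u) = φ₁ u) :
    ∀ u v w : ℝ, 0 ≤ u → 0 ≤ v → 0 ≤ w →
      ((u * v * w : ℝ) : EReal) ≤
        orliczConjE φ₂ u +
          (((1 / 2) * (φ₁ (2 * v) + φ₂ (ψstar (2 * w))) : ℝ) : EReal) := by
  intro u v w _ hv hw
  have hψstar_nonneg : 0 ≤ ψstar (2 * w) := by
    have := orliczConjE_nonneg hψconv hψ0 (2 * w)
    rw [← hψstar _ (by positivity)] at this
    exact_mod_cast this
  have hyoung_ψ : 2 * w * (2 * v) ≤ ψstar (2 * w) + ψ (2 * v) := by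
    have := coe_mul_le_orliczConjE_add hψconv hψ0 (2 * w) (by positivity : 0 ≤ 2 * v)
    rw [← hψstar _ (by positivity)] at this
    exact_mod_cast this
  have hφ₂mono : MonotoneOn φ₂ (Ici 0) :=
    hφ₂conv.monotoneOn_Ici_of_isMinOn fun x hx => by simpa [hφ₂0] using hφ₂nn x hx
  have hφ₂vw : φ₂ (v * w) ≤ 1 / 2 * (φ₁ (2 * v) + φ₂ (ψstar (2 * w))) := by
    rw [← hcomp (2 * v) (by positivity)]
    exact hφ₂conv.le_half_add_of_le_midpoint hφ₂mono (mem_Ici.2 (by positivity))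
      (mem_Ici.2 (hψnn _ (by positivity))) hψstar_nonneg (by nlinarith)
  calc ((u * v * w : ℝ) : EReal) = ((u * (v * w) : ℝ) : EReal) := by rw [mul_assoc]
    _ ≤ orliczConjE φ₂ u + φ₂ (v * w) := coe_mul_le_orliczConjE_add hφ₂conv hφ₂0 u (by positivity)
    _ ≤ _ := by gcongr

/-- Let ψ, φ₁, φ₂ be Orlicz functions, ψ* the (finite-valued) complementary
function of ψ, and suppose φ₂ ∘ ψ = φ₁. With ζ = φ₂ ∘ ψ*, for all u, v, w ≥ 0:
uvw ≤ φ₂*(u) + (1/2)·[φ₁(2v) + ζ(2w)]. -/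
theorem orlicz_mult_ineq_a (ψ φ₁ φ₂ ψstar : ℝ → ℝ)
    (hψconv : ConvexOn ℝ (Set.Ici 0) ψ) (hψ0 : ψ 0 = 0)
    (hψnn : ∀ x, 0 ≤ x → 0 ≤ ψ x) (hψtop : Tendsto ψ atTop atTop)
    (hφ₁conv : ConvexOn ℝ (Set.Ici 0) φ₁) (hφ₁0 : φ₁ 0 = 0)
    (hφ₁nn : ∀ x, 0 ≤ x → 0 ≤ φ₁ x) (hφ₁top : Tendsto φ₁ atTop atTop)
    (hφ₂conv : ConvexOn ℝ (Set.Ici 0) φ₂) (hφ₂0 : φ₂ 0 = 0)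
    (hφ₂nn : ∀ x, 0 ≤ x → 0 ≤ φ₂ x) (hφ₂top : Tendsto φ₂ atTop atTop)
    (hψstar : ∀ u : ℝ, 0 ≤ u → ((ψstar u : ℝ) : EReal) = orliczConjE ψ u)
    (hcomp : ∀ u : ℝ, 0 ≤ u → φ₂ (ψ u) = φ₁ u) :
    ∀ u v w : ℝ, 0 ≤ u → 0 ≤ v → 0 ≤ w →
      ((u * v * w : ℝ) : EReal) ≤
        orliczConjE φ₂ u +
          (((1 / 2) * (φ₁ (2 * v) + φ₂ (ψstar (2 * w))) : ℝ) : EReal) :=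
  orlicz_mult_ineq_a_general ψ φ₁ φ₂ ψstar hψconv hψ0 hψnn hφ₂conv hφ₂0 hφ₂nn hψstar hcomp
end

section
/- Let (X, Σ) be a measurable space with two equivalent σ-finite measures ν₁, ν₂ (each absolutely continuous with respect to the other), and let φ be an Orlicz function satisfying φ(auv) ≤ φ(u)·φ(v) for all u, v ≥ 0 for some a > 0 (Δ' globally), with φ a continuous bijection of [0, ∞) so that φ⁻¹ is a proper inverse. Then for every f ∈ L^φ(ν₁), the function φ⁻¹(dν₁/dν₂)·f belongs to L^φ(ν₂) and ‖φ⁻¹(dν₁/dν₂)·f‖_{φ,ν₂} ≤ a⁻¹·‖f‖_{φ,ν₁} in the Luxemburg norm. (Equivalently, the map f ↦ φ⁻¹(dν₁/dν₂)·f is bounded from L^φ(ν₁) to L^φ(ν₂) with norm at most 1/a.) -/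
open Filter MeasureTheory

/-- Membership of L^φ: ∫ φ(λ|f|) dν < ∞ for some λ > 0. -/
def MemOrlicz {X : Type*} [MeasurableSpace X] (ν : Measure X) (φ : ℝ → ℝ) (f : X → ℝ) : Prop :=
  Measurable f ∧ ∃ lam : ℝ, 0 < lam ∧ Integrable (fun x => φ (lam * |f x|)) ν

/-- The Luxemburg norm ‖f‖_φ = inf{λ > 0 : ∫ φ(|f|/λ) dν ≤ 1}. -/
noncomputable def luxNorm {X : Type*} [MeasurableSpace X] (ν : Measure X) (φ : ℝ → ℝ)
    (f : X → ℝ) : ℝ :=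
  sInf {lam : ℝ | 0 < lam ∧ ∫ x, φ (|f x| / lam) ∂ν ≤ 1}

/-!
Put `w = dν₁/dν₂` and `g = φ⁻¹ ∘ w`. Applying Δ' with `v = g x` gives the pointwise bound
`φ (a u g) ≤ w φ(u)`, and integrating `w φ(u)` against `ν₂` is integrating `φ(u)` against `ν₁`.
With `u = |f| / λ` this turns every admissible `λ` for `f` in the Luxemburg norm over `ν₁` into the
admissible `a⁻¹ λ` for `g f` over `ν₂`. Δ' also makes `φ(|f|/λ)` integrable for every `λ > 0` as
soon as it is for one, which rules out junk values of the integrals.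
-/

open Set

lemma ConvexOn.map_mul_le_mul_of_map_zero {φ : ℝ → ℝ} (hconv : ConvexOn ℝ (Ici 0) φ)
    (h0 : φ 0 = 0) {t u : ℝ} (ht0 : 0 ≤ t) (ht1 : t ≤ 1) (hu : 0 ≤ u) : φ (t * u) ≤ t * φ u := by
  have := hconv.2 (mem_Ici.2 hu) (mem_Ici.2 le_rfl) ht0 (sub_nonneg.2 ht1) (by ring)
  simpa only [smul_eq_mul, mul_zero, add_zero, h0] using this

lemma StrictMonoOn.monotoneOn_of_rightInverse {φ φinv : ℝ → ℝ} (hmono : StrictMonoOn φ (Ici 0))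
    (hinv1 : ∀ t : ℝ, 0 ≤ t → φ (φinv t) = t) (hinv2 : ∀ t : ℝ, 0 ≤ t → 0 ≤ φinv t) :
    MonotoneOn φinv (Ici 0) := by
  intro s hs t ht hst
  rwa [← hmono.le_iff_le (hinv2 s hs) (hinv2 t ht), hinv1 s hs, hinv1 t ht]

lemma MonotoneOn.measurable_comp_of_nonneg {X : Type*} [MeasurableSpace X] {ψ : ℝ → ℝ}
    (hψ : MonotoneOn ψ (Ici 0)) {u : X → ℝ} (hu : Measurable u) (hu0 : ∀ x, 0 ≤ u x) :
    Measurable fun x => ψ (u x) := by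
  have hmax : Monotone fun t => ψ (max t 0) := fun s t hst =>
    hψ (le_max_right s 0) (le_max_right t 0) (max_le_max hst le_rfl)
  convert hmax.measurable.comp hu using 2 with x
  simp only [Function.comp_apply, max_eq_left (hu0 x)]

lemma map_mul_inv_le_mul {φ φinv : ℝ → ℝ} (hinv1 : ∀ t : ℝ, 0 ≤ t → φ (φinv t) = t)
    (hinv2 : ∀ t : ℝ, 0 ≤ t → 0 ≤ φinv t) {a : ℝ}
    (hΔ : ∀ u v : ℝ, 0 ≤ u → 0 ≤ v → φ (a * u * v) ≤ φ u * φ v) {u t : ℝ} (hu : 0 ≤ u)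
    (ht : 0 ≤ t) : φ (a * u * φinv t) ≤ t * φ u := by
  simpa only [hinv1 t ht, mul_comm] using hΔ u (φinv t) hu (hinv2 t ht)

section Integrability

variable {X : Type*} [MeasurableSpace X] {φ : ℝ → ℝ}

lemma MeasureTheory.Integrable.comp_const_mul_of_delta' {ν : Measure X}
    (hmono : MonotoneOn φ (Ici 0)) (hnn : ∀ x, 0 ≤ x → 0 ≤ φ x) {a : ℝ} (ha : 0 < a)
    (hΔ : ∀ u v : ℝ, 0 ≤ u → 0 ≤ v → φ (a * u * v) ≤ φ u * φ v) {u : X → ℝ} (hu : Measurable u)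
    (hu0 : ∀ x, 0 ≤ u x) (hint : Integrable (fun x => φ (u x)) ν) {c : ℝ} (hc : 0 ≤ c) :
    Integrable (fun x => φ (c * u x)) ν := by
  have hmeas := hmono.measurable_comp_of_nonneg (hu.const_mul c) fun x => mul_nonneg hc (hu0 x)
  refine (hint.mul_const (φ (c / a))).mono' hmeas.aestronglyMeasurable (ae_of_all _ fun x => ?_)
  rw [Real.norm_of_nonneg (hnn _ (mul_nonneg hc (hu0 x)))]
  calc φ (c * u x) = φ (a * u x * (c / a)) := by congr 1; field_simp
    _ ≤ φ (u x) * φ (c / a) := hΔ _ _ (hu0 x) (by positivity)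

lemma MemOrlicz.integrable_comp_div {ν : Measure X} {f : X → ℝ} (hf : MemOrlicz ν φ f)
    (hmono : MonotoneOn φ (Ici 0)) (hnn : ∀ x, 0 ≤ x → 0 ≤ φ x) {a : ℝ} (ha : 0 < a)
    (hΔ : ∀ u v : ℝ, 0 ≤ u → 0 ≤ v → φ (a * u * v) ≤ φ u * φ v) {lam : ℝ} (hlam : 0 < lam) :
    Integrable (fun x => φ (|f x| / lam)) ν := by
  obtain ⟨hfm, l0, hl0, hint⟩ := hf
  have := hint.comp_const_mul_of_delta' hmono hnn ha hΔ (hfm.abs.const_mul l0)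
    (fun x => by positivity) (c := (l0 * lam)⁻¹) (by positivity)
  exact this.congr (ae_of_all _ fun x => congrArg φ (by field_simp))

lemma MemOrlicz.exists_integral_comp_div_le_one {ν : Measure X} {f : X → ℝ}
    (hf : MemOrlicz ν φ f) (hconv : ConvexOn ℝ (Ici 0) φ) (h0 : φ 0 = 0)
    (hnn : ∀ x, 0 ≤ x → 0 ≤ φ x) : ∃ lam, 0 < lam ∧ ∫ x, φ (|f x| / lam) ∂ν ≤ 1 := by
  obtain ⟨-, l0, hl0, hint⟩ := hf
  set I := ∫ x, φ (l0 * |f x|) ∂ν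
  have hI : 0 ≤ I := integral_nonneg fun x => hnn _ (by positivity)
  have ht1 : (1 + I)⁻¹ ≤ 1 := inv_le_one_of_one_le₀ (by linarith)
  refine ⟨(1 + I) / l0, by positivity, ?_⟩
  calc ∫ x, φ (|f x| / ((1 + I) / l0)) ∂ν ≤ ∫ x, (1 + I)⁻¹ * φ (l0 * |f x|) ∂ν := by
        refine integral_mono_of_nonneg (ae_of_all _ fun x => hnn _ (by positivity))
          (hint.const_mul _) (ae_of_all _ fun x => ?_)
        calc φ (|f x| / ((1 + I) / l0)) = φ ((1 + I)⁻¹ * (l0 * |f x|)) := by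
              congr 1; field_simp
          _ ≤ _ := hconv.map_mul_le_mul_of_map_zero h0 (by positivity) ht1 (by positivity)
    _ = (1 + I)⁻¹ * I := integral_const_mul _ _
    _ ≤ 1 := by rw [inv_mul_le_iff₀ (by positivity)]; linarith

end Integrability

lemma luxNorm_le_mul_of_forall {X : Type*} [MeasurableSpace X] {ν₁ ν₂ : Measure X}
    {φ : ℝ → ℝ} {f g : X → ℝ} {c : ℝ} (hc : 0 < c)
    (hne : ∃ lam, 0 < lam ∧ ∫ x, φ (|f x| / lam) ∂ν₁ ≤ 1)
    (h : ∀ lam, 0 < lam → ∫ x, φ (|f x| / lam) ∂ν₁ ≤ 1 → ∫ x, φ (|g x| / (c * lam)) ∂ν₂ ≤ 1) :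
    luxNorm ν₂ φ g ≤ c * luxNorm ν₁ φ f := by
  rw [← div_le_iff₀' hc]
  refine le_csInf hne fun lam ⟨hlam, hle⟩ => (div_le_iff₀' hc).2 ?_
  exact csInf_le ⟨0, fun _ hx => hx.1.le⟩ ⟨by positivity, h lam hlam hle⟩

section RadonNikodym

variable {X : Type*} [MeasurableSpace X] {ν₁ ν₂ : Measure X} {φ φinv : ℝ → ℝ} {a : ℝ} {u : X → ℝ}

lemma measurable_comp_rnDeriv_toReal {ψ : ℝ → ℝ} (hψ : MonotoneOn ψ (Ici 0)) :
    Measurable fun x => ψ (ν₁.rnDeriv ν₂ x).toReal :=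
  hψ.measurable_comp_of_nonneg (Measure.measurable_rnDeriv ν₁ ν₂).ennreal_toReal
    fun _ => ENNReal.toReal_nonneg

lemma integrable_comp_mul_inv_rnDeriv [SigmaFinite ν₁] [SigmaFinite ν₂] (h12 : ν₁ ≪ ν₂)
    (hmono : StrictMonoOn φ (Ici 0)) (hnn : ∀ x, 0 ≤ x → 0 ≤ φ x)
    (hinv1 : ∀ t : ℝ, 0 ≤ t → φ (φinv t) = t) (hinv2 : ∀ t : ℝ, 0 ≤ t → 0 ≤ φinv t) (ha : 0 ≤ a)
    (hΔ : ∀ u v : ℝ, 0 ≤ u → 0 ≤ v → φ (a * u * v) ≤ φ u * φ v) (hu : Measurable u)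
    (hu0 : ∀ x, 0 ≤ u x) (hint : Integrable (fun x => φ (u x)) ν₁) :
    Integrable (fun x => φ (a * u x * φinv (ν₁.rnDeriv ν₂ x).toReal)) ν₂ := by
  have hg := measurable_comp_rnDeriv_toReal (ν₁ := ν₁) (ν₂ := ν₂)
    (hmono.monotoneOn_of_rightInverse hinv1 hinv2)
  have harg0 : ∀ x, 0 ≤ a * u x * φinv (ν₁.rnDeriv ν₂ x).toReal := fun x =>
    mul_nonneg (mul_nonneg ha (hu0 x)) (hinv2 _ ENNReal.toReal_nonneg)
  have hmeas := hmono.monotoneOn.measurable_comp_of_nonneg ((hu.const_mul a).mul hg) harg0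
  refine ((integrable_toReal_rnDeriv_mul_iff h12).2 hint).mono' hmeas.aestronglyMeasurable
    (ae_of_all _ fun x => ?_)
  rw [Real.norm_of_nonneg (hnn _ (harg0 x))]
  exact map_mul_inv_le_mul hinv1 hinv2 hΔ (hu0 x) ENNReal.toReal_nonneg

lemma integral_comp_mul_inv_rnDeriv_le [SigmaFinite ν₁] [SigmaFinite ν₂] (h12 : ν₁ ≪ ν₂)
    (hnn : ∀ x, 0 ≤ x → 0 ≤ φ x) (hinv1 : ∀ t : ℝ, 0 ≤ t → φ (φinv t) = t)
    (hinv2 : ∀ t : ℝ, 0 ≤ t → 0 ≤ φinv t) (ha : 0 ≤ a)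
    (hΔ : ∀ u v : ℝ, 0 ≤ u → 0 ≤ v → φ (a * u * v) ≤ φ u * φ v)
    (hu0 : ∀ x, 0 ≤ u x) (hint : Integrable (fun x => φ (u x)) ν₁) :
    ∫ x, φ (a * u x * φinv (ν₁.rnDeriv ν₂ x).toReal) ∂ν₂ ≤ ∫ x, φ (u x) ∂ν₁ := by
  have hg0 : ∀ x, 0 ≤ φinv (ν₁.rnDeriv ν₂ x).toReal := fun x => hinv2 _ ENNReal.toReal_nonneg
  rw [← integral_toReal_rnDeriv_mul h12]
  exact integral_mono_of_nonneg
    (ae_of_all _ fun x => hnn _ <| mul_nonneg (mul_nonneg ha (hu0 x)) (hg0 x))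
    ((integrable_toReal_rnDeriv_mul_iff h12).2 hint)
    (ae_of_all _ fun x => map_mul_inv_le_mul hinv1 hinv2 hΔ (hu0 x) ENNReal.toReal_nonneg)

end RadonNikodym

theorem orlicz_equiv_measures_bounded_general {X : Type*} [MeasurableSpace X]
    (ν₁ ν₂ : Measure X) [SigmaFinite ν₁] [SigmaFinite ν₂]
    (h12 : ν₁ ≪ ν₂)
    (φ φinv : ℝ → ℝ)
    (hconv : ConvexOn ℝ (Set.Ici 0) φ)
    (h0 : φ 0 = 0)
    (hnn : ∀ x, 0 ≤ x → 0 ≤ φ x)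
    (hmono : StrictMonoOn φ (Set.Ici 0))
    (hinv1 : ∀ t : ℝ, 0 ≤ t → φ (φinv t) = t)
    (hinv2 : ∀ t : ℝ, 0 ≤ t → 0 ≤ φinv t)
    (a : ℝ) (ha : 0 < a)
    (hΔ : ∀ u v : ℝ, 0 ≤ u → 0 ≤ v → φ (a * u * v) ≤ φ u * φ v)
    (f : X → ℝ) (hf : MemOrlicz ν₁ φ f) :
    MemOrlicz ν₂ φ (fun x => φinv ((ν₁.rnDeriv ν₂ x).toReal) * f x) ∧
      luxNorm ν₂ φ (fun x => φinv ((ν₁.rnDeriv ν₂ x).toReal) * f x) ≤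
        a⁻¹ * luxNorm ν₁ φ f := by
  set g := fun x => φinv (ν₁.rnDeriv ν₂ x).toReal
  have hg : Measurable g :=
    measurable_comp_rnDeriv_toReal (hmono.monotoneOn_of_rightInverse hinv1 hinv2)
  have habs : ∀ x, |g x * f x| = |f x| * g x := fun x => by
    rw [abs_mul, abs_of_nonneg (hinv2 _ ENNReal.toReal_nonneg), mul_comm]
  have ⟨hfm, l0, hl0, hint⟩ := hf
  refine ⟨⟨hg.mul hfm, a * l0, by positivity, ?_⟩,
    luxNorm_le_mul_of_forall (inv_pos.2 ha) (hf.exists_integral_comp_div_le_one hconv h0 hnn)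
      fun lam hlam hle => ?_⟩
  · have hint₂ := integrable_comp_mul_inv_rnDeriv h12 hmono hnn hinv1 hinv2 ha.le hΔ
      (hfm.abs.const_mul l0) (fun x => by positivity) hint
    refine hint₂.congr (ae_of_all _ fun x => ?_)
    simp only [g, habs]
    congr 1
    ring
  · have hbound := integral_comp_mul_inv_rnDeriv_le h12 hnn hinv1 hinv2 ha.le hΔ
      (fun x => by positivity) (hf.integrable_comp_div hmono.monotoneOn hnn ha hΔ hlam)
    refine (le_of_eq ?_).trans (hbound.trans hle)
    congr 1 with x
    simp only [g, habs]
    congr 1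
    field_simp

/-- For equivalent σ-finite measures ν₁, ν₂ and a strictly increasing,
continuous Orlicz function φ (with proper inverse φ⁻¹) satisfying Δ' globally with
constant a > 0, the map f ↦ φ⁻¹(dν₁/dν₂)·f sends L^φ(ν₁) into L^φ(ν₂), with
‖φ⁻¹(dν₁/dν₂)·f‖_{φ,ν₂} ≤ a⁻¹·‖f‖_{φ,ν₁}. -/
theorem orlicz_equiv_measures_bounded {X : Type*} [MeasurableSpace X]
    (ν₁ ν₂ : Measure X) [SigmaFinite ν₁] [SigmaFinite ν₂]
    (h12 : ν₁ ≪ ν₂) (h21 : ν₂ ≪ ν₁)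
    (φ φinv : ℝ → ℝ)
    (hconv : ConvexOn ℝ (Set.Ici 0) φ)
    (h0 : φ 0 = 0)
    (hnn : ∀ x, 0 ≤ x → 0 ≤ φ x)
    (hmono : StrictMonoOn φ (Set.Ici 0))
    (hcont : ContinuousOn φ (Set.Ici 0))
    (htop : Tendsto φ atTop atTop)
    (hinv1 : ∀ t : ℝ, 0 ≤ t → φ (φinv t) = t)
    (hinv2 : ∀ t : ℝ, 0 ≤ t → 0 ≤ φinv t)
    (a : ℝ) (ha : 0 < a)
    (hΔ : ∀ u v : ℝ, 0 ≤ u → 0 ≤ v → φ (a * u * v) ≤ φ u * φ v)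
    (f : X → ℝ) (hf : MemOrlicz ν₁ φ f) :
    MemOrlicz ν₂ φ (fun x => φinv ((ν₁.rnDeriv ν₂ x).toReal) * f x) ∧
      luxNorm ν₂ φ (fun x => φinv ((ν₁.rnDeriv ν₂ x).toReal) * f x) ≤
        a⁻¹ * luxNorm ν₁ φ f :=
  orlicz_equiv_measures_bounded_general ν₁ ν₂ h12 φ φinv hconv h0 hnn hmono hinv1 hinv2 a ha hΔ f hf
end
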